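/- arXiv:0811.2152 — 6 statements merged into one kernel-verified Lean document; each statement's English description precedes it below -/
import Mathlib

section
/- Let r = r₁,…,rₙ be a sequence of elements in a commutative ring R and φ: R → S a faithfully flat ring homomorphism. If φ(r₁),…,φ(rₙ) is a regular sequence in S, then r₁,…,rₙ is a regular sequence in R. -/
open RingTheory.Sequence

/-- A ring homomorphism `φ : R →+* S` is faithfully flat if it makes `S` into a
faithfully flat `R`-module (flat and faithful: `S ⊗_R M ≠ 0` for nonzero `M`). -/
def RingHom.FaithfullyFlatHom {R : Type*} {S : Type*} [CommRing R] [CommRing S]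
    (φ : R →+* S) : Prop :=
  letI : Algebra R S := φ.toAlgebra
  Module.FaithfullyFlat R S

/-!
Tensoring with a faithfully flat module `N` reflects injectivity of `r • ·`, and
`N ⊗ (M ⧸ r • M) ≃ (N ⊗ M) ⧸ r • (N ⊗ M)`, so a weakly regular sequence on `N ⊗ M` is one on
`M`, by induction on its length. Apply this to `N = S`, `M = R`, with `S ⊗[R] R ≃ S`.
-/

open scoped TensorProduct

section FaithfullyFlat

variable {R N M : Type*} [CommRing R] [AddCommGroup N] [Module R N] [Module.FaithfullyFlat R N]
  [AddCommGroup M] [Module R M]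

theorem IsSMulRegular.of_lTensor {r : R} (h : IsSMulRegular (N ⊗[R] M) r) :
    IsSMulRegular M r := by
  refine (Module.FaithfullyFlat.lTensor_injective_iff_injective R N
    (DistribSMul.toLinearMap R M r)).mp ?_
  rw [LinearMap.lTensor_smul_action]
  exact h

theorem RingTheory.Sequence.IsWeaklyRegular.of_lTensor {rs : List R}
    (h : IsWeaklyRegular (N ⊗[R] M) rs) : IsWeaklyRegular M rs := by
  induction rs generalizing M with
  | nil => exact IsWeaklyRegular.nil R M
  | cons r rs ih =>
    rw [isWeaklyRegular_cons_iff] at h ⊢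
    obtain ⟨hr, hrs⟩ := h
    refine ⟨hr.of_lTensor, ih ?_⟩
    exact ((QuotSMulTop.tensorQuotSMulTopEquivQuotSMulTop r N M).isWeaklyRegular_congr rs).mpr hrs

end FaithfullyFlat

/-- If φ : R → S is faithfully flat and φ(r₁),…,φ(rₙ) is a regular
sequence in S, then r₁,…,rₙ is a regular sequence in R. -/
theorem isWeaklyRegular_of_map_faithfullyFlat {R S : Type*} [CommRing R] [CommRing S]
    (φ : R →+* S) (hφ : φ.FaithfullyFlatHom) (rs : List R)
    (h : IsWeaklyRegular S (rs.map φ)) : IsWeaklyRegular R rs := by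
  let : Algebra R S := φ.toAlgebra
  have : Module.FaithfullyFlat R S := hφ
  have hS : IsWeaklyRegular S rs := (isWeaklyRegular_map_algebraMap_iff S S rs).mp h
  exact IsWeaklyRegular.of_lTensor (N := S)
    (((TensorProduct.rid R S).isWeaklyRegular_congr rs).mpr hS)
end

section
/- Let K be a field. The polynomial ring K[z, w] in two variables is free as a module over the subring K[zw] generated by the product zw, with basis {1} ∪ {zᵉ, wᵉ : e ≥ 1}. -/
/-!
If `t ^ n * b i` (over `n : ℕ`, `i : ι`) is a `K`-basis of `A`, then `b` is a basis of `A` over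
`K[t]`: writing the coefficients of a relation `∑ pᵢ(t) • b i = 0` in the `K`-basis shows every
`pᵢ` vanishes. For `t = z w`, every exponent `(a, b)` of a monomial `zᵃ wᵇ` splits uniquely as
`(n, n)` plus `(e, 0)`, `(0, e)` with `e ≥ 1`, or `(0, 0)`, with `n = min a b`.
-/

open MvPolynomial

section AdjoinSingleton

variable {K A ι : Type*}

open Polynomial in
theorem linearIndependent_adjoin_singleton_of_pow_mul [CommRing K] [Ring A] [Algebra K A]
    {t : A} {b : ι → A} (hb : LinearIndependent K fun p : ℕ × ι => t ^ p.1 * b p.2) :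
    LinearIndependent (Algebra.adjoin K {t}) b := by
  classical
  rw [linearIndependent_iff']
  intro s g hg i hi
  choose p hp using fun j =>
    (AlgHom.mem_range _).1 ((Algebra.adjoin_singleton_eq_range_aeval K t).le (g j).2)
  set N := s.sup (fun j => (p j).natDegree) + 1
  have hN : ∀ j ∈ s, (p j).natDegree < N := fun j hj =>
    Nat.lt_succ_of_le (Finset.le_sup (f := fun j => (p j).natDegree) hj)
  have hsum : ∑ x ∈ Finset.range N ×ˢ s, (p x.2).coeff x.1 • (t ^ x.1 * b x.2) = 0 := by
    rw [Finset.sum_product_right]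
    simp_rw [← smul_mul_assoc, ← Finset.sum_mul]
    rw [← hg]
    refine Finset.sum_congr rfl fun j hj => ?_
    rw [← aeval_eq_sum_range' (hN j hj), hp]
    rfl
  have hcoeff := linearIndependent_iff'.1 hb _ _ hsum
  have hpi : p i = 0 := by
    ext n
    by_cases hn : n < N
    · exact hcoeff (n, i) (Finset.mem_product.2 ⟨Finset.mem_range.2 hn, hi⟩)
    · exact coeff_eq_zero_of_natDegree_lt (by have := hN i hi; omega)
  exact Subtype.ext (by rw [← hp i, hpi, map_zero, ZeroMemClass.coe_zero])

theorem span_adjoin_singleton_eq_top_of_pow_mul [CommSemiring K] [Semiring A] [Algebra K A]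
    {t : A} {b : ι → A}
    (hb : Submodule.span K (Set.range fun p : ℕ × ι => t ^ p.1 * b p.2) = ⊤) :
    Submodule.span (Algebra.adjoin K {t}) (Set.range b) = ⊤ := by
  have hle : Submodule.span K (Set.range fun p : ℕ × ι => t ^ p.1 * b p.2) ≤
      (Submodule.span (Algebra.adjoin K {t}) (Set.range b)).restrictScalars K := by
    rw [Submodule.span_le]
    rintro _ ⟨⟨n, i⟩, rfl⟩
    have hmem := Submodule.smul_mem (Submodule.span (Algebra.adjoin K {t}) (Set.range b))
      (⟨t ^ n, pow_mem (Algebra.self_mem_adjoin_singleton K t) n⟩ : Algebra.adjoin K {t})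
      (Submodule.subset_span ⟨i, rfl⟩)
    rwa [Subalgebra.smul_def, smul_eq_mul] at hmem
  rw [hb, top_le_iff] at hle
  exact (Submodule.restrictScalars_eq_top_iff _ _ _).1 hle

end AdjoinSingleton

def diagOffset : Option (Bool × ℕ+) → ℕ × ℕ
  | none => (0, 0)
  | some (false, e) => (e, 0)
  | some (true, e) => (0, e)

def diagOffsetEquiv : ℕ × Option (Bool × ℕ+) ≃ ℕ × ℕ where
  toFun p := (p.1 + (diagOffset p.2).1, p.1 + (diagOffset p.2).2)
  invFun q := (min q.1 q.2,
    if h : q.1 < q.2 then some (true, ⟨q.2 - q.1, by omega⟩)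
    else if h' : q.2 < q.1 then some (false, ⟨q.1 - q.2, by omega⟩) else none)
  left_inv := by
    rintro ⟨n, _ | ⟨_ | _, e, he⟩⟩ <;> simp_all [diagOffset]
  right_inv := by
    rintro ⟨a, b⟩
    rcases lt_trichotomy a b with h | rfl | h
    · simp [h, diagOffset]; omega
    · simp [diagOffset]
    · simp [h, not_lt_of_gt h, diagOffset]; omega

noncomputable def MvPolynomial.basisMonomialsFinTwo (R : Type*) [CommSemiring R] :
    Module.Basis (ℕ × ℕ) R (MvPolynomial (Fin 2) R) :=
  (basisMonomials (Fin 2) R).reindex (finTwoArrowEquiv' ℕ)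

theorem MvPolynomial.basisMonomialsFinTwo_apply (R : Type*) [CommSemiring R] (a b : ℕ) :
    basisMonomialsFinTwo R (a, b) = X 0 ^ a * X 1 ^ b := by
  simp [basisMonomialsFinTwo, monomial_eq, Finsupp.prod_fintype]

/-- K[z,w] is free as a module over the subring K[zw], with basis
{1} ∪ {zᵉ, wᵉ : e ≥ 1}.  Here z = X 0, w = X 1 in MvPolynomial (Fin 2) K, and the
subring is Algebra.adjoin K {z*w}. -/
theorem basis_over_adjoin_zw {K : Type*} [Field K] :
    ∃ b : Module.Basis (Option (Bool × ℕ+))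
        (Algebra.adjoin K {(X 0 * X 1 : MvPolynomial (Fin 2) K)})
        (MvPolynomial (Fin 2) K),
      b none = 1 ∧
      (∀ e : ℕ+, b (some (false, e)) = (X 0 : MvPolynomial (Fin 2) K) ^ (e : ℕ)) ∧
      (∀ e : ℕ+, b (some (true, e)) = (X 1 : MvPolynomial (Fin 2) K) ^ (e : ℕ)) := by
  let b (i : Option (Bool × ℕ+)) : MvPolynomial (Fin 2) K :=
    X 0 ^ (diagOffset i).1 * X 1 ^ (diagOffset i).2
  let B := (basisMonomialsFinTwo K).reindex diagOffsetEquiv.symm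
  have hB : ⇑B = fun p : ℕ × Option (Bool × ℕ+) => (X 0 * X 1) ^ p.1 * b p.2 := by
    ext1 ⟨n, i⟩
    simp only [B, b, Module.Basis.reindex_apply, Equiv.symm_symm, diagOffsetEquiv,
      Equiv.coe_fn_mk, basisMonomialsFinTwo_apply]
    ring
  refine ⟨.mk (linearIndependent_adjoin_singleton_of_pow_mul (hB ▸ B.linearIndependent))
    (span_adjoin_singleton_eq_top_of_pow_mul (hB ▸ B.span_eq)).ge, ?_, ?_, ?_⟩ <;>
    simp [b, diagOffset]
end

section
/- Let A ∈ ℝ^{ℓ×n} be a matrix such that the image A(ℝ₊ⁿ) of the nonnegative orthant equals the full image im(A) (i.e., A(ℝ₊ⁿ) is a vector subspace). If A ≠ 0, then there exists a nonzero vector λ ∈ ℝ₊ⁿ with Aλ = 0. -/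
/-!
If `f` maps the nonnegative orthant onto its whole range, then `f (-𝟙) = f x` for some `x ≥ 0`,
so `x + 𝟙` is a strictly positive vector in the kernel of `f`.
-/

theorem exists_pos_map_eq_zero_of_image_nonneg_eq_range {ι R M : Type*} [Ring R] [PartialOrder R]
    [IsStrictOrderedRing R] [AddCommGroup M] (f : (ι → R) →+ M)
    (h : f '' {x | 0 ≤ x} = Set.range f) : ∃ x : ι → R, (∀ j, 0 < x j) ∧ f x = 0 := by
  obtain ⟨x, hx, hfx⟩ : f (-1) ∈ f '' {x | 0 ≤ x} := h ▸ Set.mem_range_self _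
  exact ⟨x + 1, fun j => add_pos_of_nonneg_of_pos (hx j) one_pos,
    by rw [map_add, hfx, map_neg, neg_add_cancel]⟩

/-- If A(ℝ₊ⁿ) = im(A) (the image of the nonnegative orthant is the full image)
and A ≠ 0, then there is a nonzero λ ≥ 0 with Aλ = 0. -/
theorem exists_nonneg_kernel_vector {ℓ n : ℕ} (A : Matrix (Fin ℓ) (Fin n) ℝ)
    (h : A.mulVec '' {x | ∀ j, 0 ≤ x j} = Set.range A.mulVec) (hA : A ≠ 0) :
    ∃ lam : Fin n → ℝ, lam ≠ 0 ∧ (∀ j, 0 ≤ lam j) ∧ A.mulVec lam = 0 := by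
  obtain ⟨j⟩ : Nonempty (Fin n) := by
    by_contra hn
    rw [not_nonempty_iff] at hn
    exact hA (Subsingleton.elim _ _)
  obtain ⟨lam, hpos, hker⟩ :=
    exists_pos_map_eq_zero_of_image_nonneg_eq_range A.mulVecLin.toAddMonoidHom h
  exact ⟨lam, fun h0 => (hpos j).ne' (congrFun h0 j), fun j => (hpos j).le, hker⟩
end

section
/- Let A = (a_{ij}) ∈ ℝ^{ℓ×n} and suppose that for every v ∈ ℝ^ℓ the quadratic function z ↦ Σ_{i,j} v_i a_{ij} |z_j|² on ℂⁿ is either identically zero or attains both strictly positive and strictly negative values. Then A(ℝ₊ⁿ) = im(A), i.e., the image of the map J: ℂⁿ → ℝ^ℓ, J_i(z) = Σ_j a_{ij}|z_j|², is a vector subspace of ℝ^ℓ of dimension rank(A). -/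
/-!
The columns of `A` generate the cone `A(ℝ₊ⁿ)`, which is closed: by the conic Carathéodory
argument it is a finite union of images of `ℝ₊ᵏ` under injective linear maps. If some `b = A c`
lay outside it, Farkas' lemma would give `v` with `vᵀA ≥ 0` and `vᵀb < 0`. The quadratic form
`z ↦ Σ v_i a_ij |z_j|² = (vᵀA) · (|z_j|²)_j` is then nonnegative, so by hypothesis it vanishes
identically, i.e. `vᵀA = 0`, contradicting `vᵀA c < 0`. Hence `A(ℝ₊ⁿ) = im A`, and
`J(ℂⁿ) = A(ℝ₊ⁿ)` because `z ↦ (|z_j|²)_j` maps `ℂⁿ` onto `ℝ₊ⁿ`.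
-/

open Set Matrix

lemma Fintype.linearCombination_eq_comp_succAbove {R M : Type*} [Semiring R] [AddCommMonoid M]
    [Module R M] {m : ℕ} (v : Fin (m + 1) → M) {t : Fin (m + 1) → R} {k : Fin (m + 1)}
    (hk : t k = 0) :
    Fintype.linearCombination R v t =
      Fintype.linearCombination R (v ∘ k.succAbove) (t ∘ k.succAbove) := by
  simp [Fintype.linearCombination_apply, Fin.sum_univ_succAbove _ k, hk]

section ConicCaratheodory

variable {K M : Type*} [Field K] [LinearOrder K] [IsStrictOrderedRing K] [AddCommGroup M]
  [Module K M]

lemma exists_nonneg_coeff_eq_zero_of_linearCombination_eq {ι : Type*} [Fintype ι] {v : ι → M}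
    {c : ι → K} (hc : Fintype.linearCombination K v c = 0) {j₁ : ι} (hj₁ : 0 < c j₁)
    {t : ι → K} (ht : 0 ≤ t) :
    ∃ t', 0 ≤ t' ∧ (∃ k, t' k = 0) ∧
      Fintype.linearCombination K v t' = Fintype.linearCombination K v t := by
  classical
  -- move from `t` along `-c` until the first coordinate reaches zero
  obtain ⟨k, hk, hmin⟩ := Finset.exists_min_image {j | 0 < c j} (fun j => t j / c j)
    ⟨j₁, by simpa using hj₁⟩
  rw [Finset.mem_filter_univ] at hk
  refine ⟨t - (t k / c k) • c, fun j => ?_, ⟨k, by simp [hk.ne']⟩, by simp [hc]⟩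
  rcases lt_or_ge 0 (c j) with hj | hj
  · have := hmin j (by simpa using hj)
    rw [le_div_iff₀ hj] at this
    simpa using this
  · simpa using (mul_nonpos_of_nonneg_of_nonpos (div_nonneg (ht k) hk.le) hj).trans (ht j)

lemma image_Ici_linearCombination_eq_iUnion_succAbove {m : ℕ} {v : Fin (m + 1) → M}
    (hv : ¬ LinearIndependent K v) :
    Fintype.linearCombination K v '' Ici 0 =
      ⋃ k : Fin (m + 1), Fintype.linearCombination K (v ∘ k.succAbove) '' Ici 0 := by
  obtain ⟨c, hc, j₁, hj₁⟩ : ∃ c, Fintype.linearCombination K v c = 0 ∧ ∃ j, 0 < c j := by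
    obtain ⟨c, hc, j, hj⟩ := Fintype.not_linearIndependent_iff.1 hv
    rw [← Fintype.linearCombination_apply] at hc
    rcases hj.lt_or_gt with hneg | hpos
    · exact ⟨-c, by simp [hc], j, by simpa using hneg⟩
    · exact ⟨c, hc, j, hpos⟩
  apply subset_antisymm
  · rintro _ ⟨t, ht, rfl⟩
    obtain ⟨t', ht', ⟨k, hk⟩, heq⟩ := exists_nonneg_coeff_eq_zero_of_linearCombination_eq hc hj₁ ht
    exact mem_iUnion.2 ⟨k, t' ∘ k.succAbove, fun j => ht' _,
      by rw [← heq, Fintype.linearCombination_eq_comp_succAbove v hk]⟩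
  · refine iUnion_subset fun k => ?_
    rintro _ ⟨t, ht : 0 ≤ t, rfl⟩
    refine ⟨k.insertNth 0 t, fun j => ?_, ?_⟩
    · cases j using k.succAboveCases
      · simp
      · simpa using ht _
    · rw [Fintype.linearCombination_eq_comp_succAbove v
        (Fin.insertNth_apply_same (α := fun _ => K) k 0 t)]
      simp

end ConicCaratheodory

section ClosedCone

variable {E : Type*} [AddCommGroup E] [TopologicalSpace E] [IsTopologicalAddGroup E] [Module ℝ E]
  [ContinuousSMul ℝ E] [T2Space E]

lemma LinearIndependent.isClosed_image_Ici_linearCombination {ι : Type*} [Fintype ι]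
    {v : ι → E} (hv : LinearIndependent ℝ v) :
    IsClosed (Fintype.linearCombination ℝ v '' Ici 0) :=
  (LinearMap.isClosedEmbedding_of_injective (LinearMap.ker_eq_bot.2
    (linearIndependent_iff_injective_fintypeLinearCombination.1 hv))).isClosedMap _ isClosed_Ici

theorem isClosed_image_Ici_linearCombination {m : ℕ} (v : Fin m → E) :
    IsClosed (Fintype.linearCombination ℝ v '' Ici 0) := by
  induction m with
  | zero => exact linearIndependent_empty_type.isClosed_image_Ici_linearCombination
  | succ m ih =>
    by_cases hv : LinearIndependent ℝ v
    · exact hv.isClosed_image_Ici_linearCombination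
    · rw [image_Ici_linearCombination_eq_iUnion_succAbove hv]
      exact isClosed_iUnion_of_finite fun k => ih _

end ClosedCone

lemma Matrix.mulVecLin_eq_linearCombination {m n : Type*} [Fintype n] (A : Matrix m n ℝ) :
    A.mulVecLin = Fintype.linearCombination ℝ A.col := by
  ext t i
  simp [mulVec, dotProduct, Fintype.linearCombination_apply, mul_comm]

lemma Matrix.isClosed_image_Ici_mulVec {m : Type*} [Fintype m] {n : ℕ} (A : Matrix m (Fin n) ℝ) :
    IsClosed (A.mulVec '' Ici 0) := by
  rw [← coe_mulVecLin, mulVecLin_eq_linearCombination]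
  exact isClosed_image_Ici_linearCombination A.col

lemma StrongDual.apply_eq_dotProduct {m : Type*} [Fintype m] [DecidableEq m]
    (f : StrongDual ℝ (m → ℝ)) (x : m → ℝ) : f x = (fun i => f (Pi.single i 1)) ⬝ᵥ x := by
  conv_lhs => rw [← Finset.univ_sum_single x]
  refine (map_sum f _ _).trans (Finset.sum_congr rfl fun i _ => ?_)
  rw [mul_comm, ← smul_eq_mul, ← map_smul, ← Pi.single_smul', smul_eq_mul, mul_one]

theorem Matrix.image_Ici_mulVec_eq_range {m : Type*} [Fintype m] [DecidableEq m] {n : ℕ}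
    (A : Matrix m (Fin n) ℝ) (hA : ∀ v : m → ℝ, 0 ≤ v ᵥ* A → v ᵥ* A = 0) :
    A.mulVec '' Ici 0 = range A.mulVec := by
  refine (image_subset_range _ _).antisymm ?_
  rintro _ ⟨c, rfl⟩
  by_contra hc
  let C : ProperCone ℝ (m → ℝ) :=
    { toSubmodule := (PointedCone.positive ℝ (Fin n → ℝ)).map A.mulVecLin
      isClosed' := A.isClosed_image_Ici_mulVec }
  obtain ⟨f, hfC, hfc⟩ := C.hyperplane_separation_point hc
  set v : m → ℝ := fun i => f (Pi.single i 1)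
  have hf : ∀ t, f (A *ᵥ t) = (v ᵥ* A) ⬝ᵥ t := fun t => by
    rw [f.apply_eq_dotProduct, dotProduct_mulVec]
  have hvA : 0 ≤ v ᵥ* A := fun j => by
    have : 0 ≤ f (A *ᵥ Pi.single j 1) := hfC _ ⟨_, Pi.single_nonneg.2 zero_le_one, rfl⟩
    rwa [hf, dotProduct_single_one] at this
  rw [hf, hA v hvA, zero_dotProduct] at hfc
  exact hfc.false

lemma Matrix.vecMul_dotProduct_eq_sum_sum {m n : Type*} [Fintype m] [Fintype n]
    (v : m → ℝ) (A : Matrix m n ℝ) (w : n → ℝ) :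
    (v ᵥ* A) ⬝ᵥ w = ∑ i, ∑ j, v i * A i j * w j := by
  simp only [dotProduct, vecMul, Finset.sum_mul]
  exact Finset.sum_comm

lemma range_normSq_comp (ι : Type*) :
    range (fun z : ι → ℂ => fun j => Complex.normSq (z j)) = Ici 0 := by
  refine subset_antisymm ?_ fun t (ht : 0 ≤ t) => ⟨fun j => (√(t j) : ℂ), ?_⟩
  · rintro _ ⟨z, rfl⟩ j
    exact Complex.normSq_nonneg _
  · ext j
    simp [Complex.normSq_ofReal, Real.mul_self_sqrt (ht j)]

/-- If for every v ∈ ℝ^ℓ the function z ↦ Σ_{i,j} v_i a_{ij} |z_j|² on ℂⁿ is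
identically zero or attains both strictly positive and strictly negative values, then the
image of J, J_i(z) = Σ_j a_{ij}|z_j|², is the vector subspace im(A), of dimension rank(A). -/
theorem range_momentMap_eq_range_of_sign_change {ℓ n : ℕ} (A : Matrix (Fin ℓ) (Fin n) ℝ)
    (h : ∀ v : Fin ℓ → ℝ,
      (∀ z : Fin n → ℂ, ∑ i, ∑ j, v i * A i j * Complex.normSq (z j) = 0) ∨
      ((∃ z : Fin n → ℂ, 0 < ∑ i, ∑ j, v i * A i j * Complex.normSq (z j)) ∧
       (∃ z : Fin n → ℂ, ∑ i, ∑ j, v i * A i j * Complex.normSq (z j) < 0))) :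
    Set.range (fun z : Fin n → ℂ => fun i => ∑ j, A i j * Complex.normSq (z j)) =
      Set.range A.mulVec ∧
    Module.finrank ℝ (LinearMap.range A.mulVecLin) = A.rank := by
  have hA : ∀ v : Fin ℓ → ℝ, 0 ≤ v ᵥ* A → v ᵥ* A = 0 := by
    intro v hv
    simp_rw [← vecMul_dotProduct_eq_sum_sum] at h
    rcases h v with hzero | ⟨-, z, hneg⟩
    · ext j
      simpa [Pi.single_apply, apply_ite Complex.normSq, dotProduct] using hzero (Pi.single j 1)
    · exact absurd hneg (dotProduct_nonneg_of_nonneg hv fun j => Complex.normSq_nonneg _).not_gt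
  refine ⟨?_, rfl⟩
  rw [← A.image_Ici_mulVec_eq_range hA, ← range_normSq_comp, ← range_comp]
  rfl
end

section
/- Let A ∈ ℝ^{ℓ×n} be a nonzero matrix whose set of column vectors has convex hull conv(A), and suppose 0 lies in the relative interior of conv(A). Then for every v ∈ ℝ^ℓ, the function J·v: ℂⁿ → ℝ, z ↦ Σ_{i,j} v_i a_{ij}|z_j|², is either identically zero or attains both strictly positive and strictly negative values. -/
/-!
A linear functional that is nonnegative on a set having `0` in its relative interior must vanish
on it: every point `p` of the set can be pushed slightly past the origin to some `t • p` with
`t < 0` without leaving the set. Applied to the functional `x ↦ v ⬝ᵥ x` on the convex hull of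
the columns of `A`, the coefficients `c j = Σ_i v_i a_{ij}` are either all zero or of both signs,
and `J·v(z) = Σ_j c_j |z_j|²` takes the value `c j` at the unit vector `e_j`.
-/

open Set Complex Matrix

section IntrinsicInterior

variable {E : Type*} [AddCommGroup E] [Module ℝ E] [TopologicalSpace E] [ContinuousSMul ℝ E]
  {s : Set E}

lemma exists_neg_smul_mem_of_zero_mem_intrinsicInterior (h0 : (0 : E) ∈ intrinsicInterior ℝ s)
    {p : E} (hp : p ∈ s) : ∃ t : ℝ, t < 0 ∧ t • p ∈ s := by
  obtain ⟨q, hq, hq0⟩ := mem_intrinsicInterior.1 h0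
  have h0E : (0 : E) ∈ affineSpan ℝ s := hq0 ▸ q.2
  have hline (t : ℝ) : t • p ∈ affineSpan ℝ s := by
    simpa using AffineSubspace.smul_vsub_vadd_mem _ t (subset_affineSpan ℝ s hp) h0E h0E
  let γ : ℝ → affineSpan ℝ s := fun t => ⟨t • p, hline t⟩
  have hγ : Continuous γ := (continuous_id.smul continuous_const).subtype_mk _
  have hγ0 : γ 0 = q := Subtype.ext (by simp [γ, hq0])
  have hnear : ∀ᶠ t in nhdsWithin 0 (Iio 0), γ t ∈ interior ((↑) ⁻¹' s) :=
    nhdsWithin_le_nhds <| hγ.continuousAt.eventually_mem (hγ0 ▸ isOpen_interior.mem_nhds hq)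
  obtain ⟨t, ht, ht0⟩ := (hnear.and self_mem_nhdsWithin).exists
  exact ⟨t, ht0, interior_subset (s := ((↑) : affineSpan ℝ s → E) ⁻¹' s) ht⟩

lemma eq_zero_of_nonneg_of_zero_mem_intrinsicInterior (h0 : (0 : E) ∈ intrinsicInterior ℝ s)
    (f : E →ₗ[ℝ] ℝ) (hf : ∀ x ∈ s, 0 ≤ f x) : ∀ x ∈ s, f x = 0 := by
  intro p hp
  obtain ⟨t, ht, hts⟩ := exists_neg_smul_mem_of_zero_mem_intrinsicInterior h0 hp
  have hnonneg : 0 ≤ t * f p := by simpa using hf _ hts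
  exact le_antisymm (nonpos_of_mul_nonneg_right hnonneg ht) (hf p hp)

lemma eq_zero_or_exists_pos_and_exists_neg_of_zero_mem_intrinsicInterior_convexHull
    {ι : Type*} {p : ι → E} (h0 : (0 : E) ∈ intrinsicInterior ℝ (convexHull ℝ (range p)))
    (f : E →ₗ[ℝ] ℝ) :
    (∀ j, f (p j) = 0) ∨ ((∃ j, 0 < f (p j)) ∧ ∃ j, f (p j) < 0) := by
  have vanish (g : E →ₗ[ℝ] ℝ) (hg : ∀ j, 0 ≤ g (p j)) (j : ι) : g (p j) = 0 :=
    eq_zero_of_nonneg_of_zero_mem_intrinsicInterior h0 g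
      (fun _ hx => convexHull_min (t := {w | 0 ≤ g w}) (range_subset_iff.2 hg)
        (convex_halfSpace_ge g.isLinear 0) hx)
      _ (subset_convexHull ℝ _ (mem_range_self j))
  refine or_iff_not_imp_right.2 fun h => ?_
  rw [not_and_or] at h
  push Not at h
  rcases h with h | h
  · intro j
    simpa using vanish (-f) (by simpa using h) j
  · exact vanish f h

end IntrinsicInterior

lemma sum_mul_normSq_single {ι : Type*} [Fintype ι] [DecidableEq ι] (c : ι → ℝ) (j : ι) :
    ∑ k, c k * normSq ((Pi.single j 1 : ι → ℂ) k) = c j := by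
  simp [Pi.single_apply]

theorem sign_change_of_zero_mem_relint_general {ℓ n : ℕ} (A : Matrix (Fin ℓ) (Fin n) ℝ)
    (h0 : (0 : Fin ℓ → ℝ) ∈
      intrinsicInterior ℝ (convexHull ℝ (Set.range fun j i => A i j))) :
    ∀ v : Fin ℓ → ℝ,
      (∀ z : Fin n → ℂ, ∑ i, ∑ j, v i * A i j * Complex.normSq (z j) = 0) ∨
      ((∃ z : Fin n → ℂ, 0 < ∑ i, ∑ j, v i * A i j * Complex.normSq (z j)) ∧
       (∃ z : Fin n → ℂ, ∑ i, ∑ j, v i * A i j * Complex.normSq (z j) < 0)) := by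
  intro v
  have hJ (z : Fin n → ℂ) : ∑ i, ∑ j, v i * A i j * normSq (z j) =
      ∑ j, dotProductBilin ℝ ℝ v (fun i => A i j) * normSq (z j) := by
    rw [Finset.sum_comm]
    simp [dotProduct, Finset.sum_mul]
  simp only [hJ]
  rcases eq_zero_or_exists_pos_and_exists_neg_of_zero_mem_intrinsicInterior_convexHull h0
    (dotProductBilin ℝ ℝ v) with hzero | ⟨⟨j, hj⟩, k, hk⟩
  · exact Or.inl fun z => by simp [hzero]
  · exact Or.inr ⟨⟨Pi.single j 1, by rwa [sum_mul_normSq_single]⟩,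
      ⟨Pi.single k 1, by rwa [sum_mul_normSq_single]⟩⟩

/-- If A ≠ 0 and 0 lies in the relative interior of the convex hull of the
columns of A, then for every v the function z ↦ Σ_{i,j} v_i a_{ij}|z_j|² on ℂⁿ is identically
zero or attains both strictly positive and strictly negative values. -/
theorem sign_change_of_zero_mem_relint {ℓ n : ℕ} (A : Matrix (Fin ℓ) (Fin n) ℝ)
    (hA : A ≠ 0)
    (h0 : (0 : Fin ℓ → ℝ) ∈
      intrinsicInterior ℝ (convexHull ℝ (Set.range fun j i => A i j))) :
    ∀ v : Fin ℓ → ℝ,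
      (∀ z : Fin n → ℂ, ∑ i, ∑ j, v i * A i j * Complex.normSq (z j) = 0) ∨
      ((∃ z : Fin n → ℂ, 0 < ∑ i, ∑ j, v i * A i j * Complex.normSq (z j)) ∧
       (∃ z : Fin n → ℂ, ∑ i, ∑ j, v i * A i j * Complex.normSq (z j) < 0)) :=
  sign_change_of_zero_mem_relint_general A h0
end

section
/- Let A = (a₁,…,aₙ) be a nonzero row vector of integers with no zero entries, having n₊ strictly positive and n₋ strictly negative entries, n₊, n₋ ≥ 1. Then the set X_A = {z ∈ ℂⁿ : Σ_j a_j|z_j|² = 0, Σ_j|z_j|² = 1} is a smooth submanifold of ℂⁿ diffeomorphic to S^{2n₊−1} × S^{2n₋−1}. -/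
/-- The link `X_A` of the singularity: intersection of the zero level set of the quadratic
moment map `z ↦ Σ_j a_j |z_j|²` with the unit sphere in ℂⁿ. -/
def linkSet {n : ℕ} (a : Fin n → ℤ) : Set (Fin n → ℂ) :=
  {z | ∑ j, (a j : ℝ) * Complex.normSq (z j) = 0 ∧ ∑ j, Complex.normSq (z j) = 1}

/-- The product of unit spheres S^{2n₊−1} × S^{2n₋−1} inside ℂ^{n₊} × ℂ^{n₋}. -/
def sphereProd (p q : ℕ) : Set ((Fin p → ℂ) × (Fin q → ℂ)) :=
  {x | ∑ j, Complex.normSq (x.1 j) = 1 ∧ ∑ j, Complex.normSq (x.2 j) = 1}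


open Finset Complex

namespace Link15

variable {n : ℕ}

def Pset (a : Fin n → ℤ) : Finset (Fin n) := Finset.univ.filter fun j => 0 < a j
def Mset (a : Fin n → ℤ) : Finset (Fin n) := Finset.univ.filter fun j => a j < 0

noncomputable def Ab (a : Fin n → ℤ) : ℝ := 1 + ∑ j, ((a j).natAbs : ℝ)

noncomputable def sig (a : Fin n → ℤ) : ℝ := 1 / (2 * (1 + Ab a))

noncomputable def spf (a : Fin n → ℤ) (z : Fin n → ℂ) : ℝ := ∑ j ∈ Pset a, normSq (z j)
noncomputable def smf (a : Fin n → ℤ) (z : Fin n → ℂ) : ℝ := ∑ j ∈ Mset a, normSq (z j)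
noncomputable def tpf (a : Fin n → ℤ) (z : Fin n → ℂ) : ℝ :=
  ∑ j ∈ Pset a, (a j : ℝ) * normSq (z j)
noncomputable def tmf (a : Fin n → ℤ) (z : Fin n → ℂ) : ℝ :=
  ∑ j ∈ Mset a, (-(a j : ℝ)) * normSq (z j)

noncomputable def mup (a : Fin n → ℤ) (z : Fin n → ℂ) : ℝ :=
  spf a z + (tpf a z - tmf a z)^2 - sig a * (spf a z + smf a z - 1)
noncomputable def mum (a : Fin n → ℤ) (z : Fin n → ℂ) : ℝ :=
  smf a z + (tpf a z - tmf a z)^2 - sig a * (spf a z + smf a z - 1)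

variable {a : Fin n → ℤ}

lemma one_le_Ab : 1 ≤ Ab a := by
  have : (0:ℝ) ≤ ∑ j, ((a j).natAbs : ℝ) := Finset.sum_nonneg fun j _ => by positivity
  unfold Ab; linarith

lemma abs_le_Ab (j : Fin n) : |(a j : ℝ)| ≤ Ab a := by
  have h1 : ((a j).natAbs : ℝ) = |(a j : ℝ)| := by
    rw [Nat.cast_natAbs, Int.cast_abs]
  have h2 : ((a j).natAbs : ℝ) ≤ ∑ i, ((a i).natAbs : ℝ) :=
    Finset.single_le_sum (f := fun i => ((a i).natAbs : ℝ)) (fun i _ => by positivity)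
      (Finset.mem_univ j)
  unfold Ab; linarith

lemma mem_Pset {j : Fin n} : j ∈ Pset a ↔ 0 < a j := by simp [Pset]
lemma mem_Mset {j : Fin n} : j ∈ Mset a ↔ a j < 0 := by simp [Mset]

lemma spf_nonneg (z : Fin n → ℂ) : 0 ≤ spf a z :=
  Finset.sum_nonneg fun j _ => normSq_nonneg _
lemma smf_nonneg (z : Fin n → ℂ) : 0 ≤ smf a z :=
  Finset.sum_nonneg fun j _ => normSq_nonneg _

lemma spf_le_tpf (z : Fin n → ℂ) : spf a z ≤ tpf a z := by
  apply Finset.sum_le_sum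
  intro j hj
  have h1 : (1:ℝ) ≤ (a j : ℝ) := by exact_mod_cast mem_Pset.mp hj
  nlinarith [normSq_nonneg (z j)]

lemma tpf_le (z : Fin n → ℂ) : tpf a z ≤ Ab a * spf a z := by
  rw [spf, Finset.mul_sum]
  apply Finset.sum_le_sum
  intro j hj
  have h1 : (a j : ℝ) ≤ Ab a := (abs_le_Ab j).trans' (le_abs_self _)
  nlinarith [normSq_nonneg (z j)]

lemma smf_le_tmf (z : Fin n → ℂ) : smf a z ≤ tmf a z := by
  apply Finset.sum_le_sum
  intro j hj
  have h1 : (a j : ℝ) ≤ -1 := by exact_mod_cast Int.le_of_lt_add_one (by simpa using (mem_Mset.mp hj))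
  nlinarith [normSq_nonneg (z j)]

lemma tmf_le (z : Fin n → ℂ) : tmf a z ≤ Ab a * smf a z := by
  rw [smf, Finset.mul_sum]
  apply Finset.sum_le_sum
  intro j hj
  have h1 : -(a j : ℝ) ≤ Ab a := (abs_le_Ab j).trans' (neg_le_abs _)
  nlinarith [normSq_nonneg (z j)]

lemma key_pos {sp sm tp tm A σ : ℝ} (hsp : 0 ≤ sp) (hsm : 0 ≤ sm)
    (h1 : sp ≤ tp) (h2 : tp ≤ A*sp) (h3 : sm ≤ tm) (h4 : tm ≤ A*sm)
    (hA : 1 ≤ A) (hσ : σ = 1/(2*(1+A))) :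
    0 < sp + (tp - tm)^2 - σ*(sp + sm - 1) := by
  have hA0 : (0:ℝ) < 1 + A := by linarith
  have hσ0 : 0 < σ := by rw [hσ]; positivity
  have hσA : σ * (1 + A) = 1/2 := by rw [hσ]; field_simp
  have hσ4 : σ ≤ 1/4 := by
    rw [hσ]; rw [div_le_div_iff₀ (by linarith) (by norm_num)]; linarith
  rcases le_or_gt tm tp with h | h
  · have hsm' : sm ≤ A * sp := by linarith
    have : σ * (sp + sm) ≤ sp / 2 := by nlinarith
    nlinarith [sq_nonneg (tp - tm)]
  · set d := tm - tp with hd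
    have hd0 : 0 < d := by simp [hd]; linarith
    have hsm' : sm ≤ A * sp + d := by simp [hd] at *; linarith
    have key : 0 < d^2 - σ*d + σ := by
      rcases le_or_gt d 1 with h' | h'
      · nlinarith
      · nlinarith
    have : σ * (sp + sm) ≤ sp/2 + σ * d := by nlinarith
    nlinarith

lemma mup_pos (z : Fin n → ℂ) : 0 < mup a z :=
  key_pos (spf_nonneg z) (smf_nonneg z) (spf_le_tpf z) (tpf_le z) (smf_le_tmf z)
    (tmf_le z) one_le_Ab rfl

lemma mum_pos (z : Fin n → ℂ) : 0 < mum a z := by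
  have := key_pos (smf_nonneg (a := a) z) (spf_nonneg z) (smf_le_tmf z) (tmf_le z)
    (spf_le_tpf z) (tpf_le z) one_le_Ab rfl
  unfold mum sig
  have hsq : (tmf a z - tpf a z)^2 = (tpf a z - tmf a z)^2 := by ring
  rw [hsq] at this
  linarith


lemma sum_split (hnz : ∀ j, a j ≠ 0) (g : Fin n → ℝ) :
    ∑ j, g j = ∑ j ∈ Pset a, g j + ∑ j ∈ Mset a, g j := by
  classical
  rw [← Finset.sum_filter_add_sum_filter_not Finset.univ (fun j => 0 < a j) g]
  have : Finset.univ.filter (fun x => ¬ 0 < a x) = Mset a := by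
    ext j; simp only [Finset.mem_filter, Finset.mem_univ, true_and, mem_Mset]
    have := hnz j; omega
  rw [this]; rfl

lemma tpf_sub_tmf (hnz : ∀ j, a j ≠ 0) (z : Fin n → ℂ) :
    tpf a z - tmf a z = ∑ j, (a j : ℝ) * normSq (z j) := by
  rw [sum_split hnz (fun j => (a j : ℝ) * normSq (z j))]
  unfold tpf tmf
  simp only [neg_mul]
  rw [Finset.sum_neg_distrib]
  ring

lemma spf_add_smf (hnz : ∀ j, a j ≠ 0) (z : Fin n → ℂ) :
    spf a z + smf a z = ∑ j, normSq (z j) := (sum_split hnz _).symm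

lemma contDiff_normSq : ContDiff ℝ (⊤ : ℕ∞) normSq := by
  have : (normSq : ℂ → ℝ) = fun z => z.re * z.re + z.im * z.im := by
    funext z; exact normSq_apply z
  rw [this]
  exact (Complex.reCLM.contDiff.mul Complex.reCLM.contDiff).add
    (Complex.imCLM.contDiff.mul Complex.imCLM.contDiff)

lemma contDiff_coord {k : ℕ} (j : Fin k) : ContDiff ℝ (⊤ : ℕ∞) (fun z : Fin k → ℂ => z j) :=
  (ContinuousLinearMap.proj j : (Fin k → ℂ) →L[ℝ] ℂ).contDiff

lemma contDiff_normSq_coord {k : ℕ} (j : Fin k) :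
    ContDiff ℝ (⊤ : ℕ∞) (fun z : Fin k → ℂ => normSq (z j)) :=
  contDiff_normSq.comp (contDiff_coord j)

lemma contDiff_spf : ContDiff ℝ (⊤ : ℕ∞) (spf a) :=
  ContDiff.sum fun j _ => contDiff_normSq_coord j
lemma contDiff_smf : ContDiff ℝ (⊤ : ℕ∞) (smf a) :=
  ContDiff.sum fun j _ => contDiff_normSq_coord j
lemma contDiff_tpf : ContDiff ℝ (⊤ : ℕ∞) (tpf a) :=
  ContDiff.sum fun j _ => (contDiff_const.mul (contDiff_normSq_coord j))
lemma contDiff_tmf : ContDiff ℝ (⊤ : ℕ∞) (tmf a) :=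
  ContDiff.sum fun j _ => (contDiff_const.mul (contDiff_normSq_coord j))

lemma contDiff_mup : ContDiff ℝ (⊤ : ℕ∞) (mup a) := by
  unfold mup
  exact (contDiff_spf.add ((contDiff_tpf.sub contDiff_tmf).pow 2)).sub
    (contDiff_const.mul ((contDiff_spf.add contDiff_smf).sub contDiff_const))

lemma contDiff_mum : ContDiff ℝ (⊤ : ℕ∞) (mum a) := by
  unfold mum
  exact (contDiff_smf.add ((contDiff_tpf.sub contDiff_tmf).pow 2)).sub
    (contDiff_const.mul ((contDiff_spf.add contDiff_smf).sub contDiff_const))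

lemma contDiff_invsqrt {E : Type*} [NormedAddCommGroup E] [NormedSpace ℝ E] {g : E → ℝ}
    (hg : ContDiff ℝ (⊤ : ℕ∞) g) (hpos : ∀ x, 0 < g x) :
    ContDiff ℝ (⊤ : ℕ∞) fun x => (Real.sqrt (g x))⁻¹ := by
  rw [contDiff_iff_contDiffAt]; intro x
  exact ((Real.contDiffAt_sqrt (hpos x).ne').comp x hg.contDiffAt).inv
    (Real.sqrt_ne_zero'.mpr (hpos x))

lemma contDiff_sqrt_comp {E : Type*} [NormedAddCommGroup E] [NormedSpace ℝ E] {g : E → ℝ}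
    (hg : ContDiff ℝ (⊤ : ℕ∞) g) (hpos : ∀ x, 0 < g x) :
    ContDiff ℝ (⊤ : ℕ∞) fun x => Real.sqrt (g x) := by
  rw [contDiff_iff_contDiffAt]; intro x
  exact (Real.contDiffAt_sqrt (hpos x).ne').comp x hg.contDiffAt

lemma sum_transport {k : ℕ} {p : Fin n → Prop} [DecidablePred p] (E : {j // p j} ≃ Fin k)
    (h : Fin n → ℝ) : ∑ i, h (E.symm i).1 = ∑ j ∈ Finset.univ.filter p, h j := by
  rw [Equiv.sum_comp E.symm (fun x : {j // p j} => h ↑x)]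
  exact (Finset.sum_subtype _ (fun j => by simp) h).symm


lemma link_basic (hnz : ∀ j, a j ≠ 0) {z : Fin n → ℂ}
    (h1 : ∑ j, (a j : ℝ) * normSq (z j) = 0) (h2 : ∑ j, normSq (z j) = 1) :
    tpf a z = tmf a z ∧ spf a z + smf a z = 1 := by
  constructor
  · have := tpf_sub_tmf hnz z
    rw [h1] at this; linarith
  · rw [spf_add_smf hnz z, h2]

lemma link_spf_pos (hnz : ∀ j, a j ≠ 0) {z : Fin n → ℂ}
    (h1 : ∑ j, (a j : ℝ) * normSq (z j) = 0) (h2 : ∑ j, normSq (z j) = 1) :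
    0 < spf a z ∧ 0 < smf a z := by
  obtain ⟨ht, hs⟩ := link_basic hnz h1 h2
  have hA : (1:ℝ) ≤ Ab a := one_le_Ab
  have b1 := spf_le_tpf (a := a) z
  have b2 := tpf_le (a := a) z
  have b3 := smf_le_tmf (a := a) z
  have b4 := tmf_le (a := a) z
  have hsp := spf_nonneg (a := a) z
  have hsm := smf_nonneg (a := a) z
  constructor
  · nlinarith
  · nlinarith

noncomputable def dsq (w : ℂ) : ℂ →L[ℝ] ℝ :=
  (2*w.re) • Complex.reCLM + (2*w.im) • Complex.imCLM

lemma hasFDerivAt_normSq (w : ℂ) : HasFDerivAt normSq (dsq w) w := by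
  have h1 : HasFDerivAt (fun u : ℂ => u.re * u.re + u.im * u.im) (dsq w) w := by
    have hre := Complex.reCLM.hasFDerivAt (x := w)
    have him := Complex.imCLM.hasFDerivAt (x := w)
    have := (hre.fun_mul hre).fun_add (him.fun_mul him)
    refine this.congr_fderiv ?_
    ext u
    simp [dsq]
    ring
  have : (normSq : ℂ → ℝ) = fun u => u.re * u.re + u.im * u.im := by
    funext u; exact normSq_apply u
  rw [this]; exact h1

lemma dsq_apply_mul (w : ℂ) (r : ℝ) : dsq w (↑r * w) = 2 * r * normSq w := by
  simp [dsq, Complex.normSq_apply, Complex.mul_re, Complex.mul_im]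
  ring

set_option maxHeartbeats 1000000 in
lemma surj_aux (hnz : ∀ j, a j ≠ 0) {z : Fin n → ℂ}
    (h1 : ∑ j, (a j : ℝ) * normSq (z j) = 0) (h2 : ∑ j, normSq (z j) = 1) :
    Function.Surjective (fderiv ℝ (fun w : Fin n → ℂ =>
      ((∑ j, (a j : ℝ) * normSq (w j), ∑ j, normSq (w j)) : ℝ × ℝ)) z) := by
  classical
  set L1 : (Fin n → ℂ) →L[ℝ] ℝ :=
    ∑ j, (a j : ℝ) • ((dsq (z j)).comp (ContinuousLinearMap.proj j)) with hL1
  set L2 : (Fin n → ℂ) →L[ℝ] ℝ :=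
    ∑ j, (dsq (z j)).comp (ContinuousLinearMap.proj j) with hL2
  have hd1 : HasFDerivAt (fun w : Fin n → ℂ => ∑ j, (a j : ℝ) * normSq (w j)) L1 z :=
    HasFDerivAt.fun_sum fun j _ =>
      ((hasFDerivAt_normSq (z j)).comp z (hasFDerivAt_apply j z)).const_mul _
  have hd2 : HasFDerivAt (fun w : Fin n → ℂ => ∑ j, normSq (w j)) L2 z :=
    HasFDerivAt.fun_sum fun j _ =>
      (hasFDerivAt_normSq (z j)).comp z (hasFDerivAt_apply j z)
  have hD := (hd1.prodMk hd2).fderiv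
  rw [hD]
  rintro ⟨x, y⟩
  obtain ⟨ht, hs⟩ := link_basic hnz h1 h2
  obtain ⟨hsp, hsm⟩ := link_spf_pos hnz h1 h2
  have htpos : 0 < tpf a z := lt_of_lt_of_le hsp (spf_le_tpf z)
  set t := tpf a z with htt
  set c : ℝ := y/2 + smf a z * x / (2*t) with hc
  set d : ℝ := y/2 - spf a z * x / (2*t) with hdd
  set w : Fin n → ℂ := fun j => ((if 0 < a j then c else d : ℝ) : ℂ) * z j with hw
  refine ⟨w, ?_⟩
  have hterm : ∀ j, dsq (z j) (w j) = 2 * (if 0 < a j then c else d) * normSq (z j) := by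
    intro j; rw [hw]; exact dsq_apply_mul (z j) _
  have e1 : L1 w = 2*c*(tpf a z) - 2*d*(tmf a z) := by
    rw [hL1]
    simp only [ContinuousLinearMap.sum_apply, ContinuousLinearMap.smul_apply,
      ContinuousLinearMap.comp_apply, ContinuousLinearMap.proj_apply, smul_eq_mul]
    have : ∀ j, (a j : ℝ) * dsq (z j) (w j)
        = (a j : ℝ) * (2 * (if 0 < a j then c else d) * normSq (z j)) := by
      intro j; rw [hterm j]
    rw [Finset.sum_congr rfl (fun j _ => this j)]
    rw [sum_split hnz (fun j => (a j : ℝ) * (2 * (if 0 < a j then c else d) * normSq (z j)))]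
    have eP : ∑ j ∈ Pset a, (a j : ℝ) * (2 * (if 0 < a j then c else d) * normSq (z j))
        = 2*c*(tpf a z) := by
      rw [tpf, Finset.mul_sum]
      apply Finset.sum_congr rfl
      intro j hj
      rw [if_pos (mem_Pset.mp hj)]; ring
    have eM : ∑ j ∈ Mset a, (a j : ℝ) * (2 * (if 0 < a j then c else d) * normSq (z j))
        = -(2*d*(tmf a z)) := by
      rw [tmf, Finset.mul_sum, ← Finset.sum_neg_distrib]
      apply Finset.sum_congr rfl
      intro j hj
      rw [if_neg (by have := mem_Mset.mp hj; omega)]; ring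
    rw [eP, eM]; ring
  have e2 : L2 w = 2*(c * spf a z + d * smf a z) := by
    rw [hL2]
    simp only [ContinuousLinearMap.sum_apply, ContinuousLinearMap.comp_apply,
      ContinuousLinearMap.proj_apply]
    rw [Finset.sum_congr rfl (fun j _ => hterm j)]
    rw [sum_split hnz (fun j => 2 * (if 0 < a j then c else d) * normSq (z j))]
    have eP : ∑ j ∈ Pset a, 2 * (if 0 < a j then c else d) * normSq (z j)
        = 2*c*(spf a z) := by
      rw [spf, Finset.mul_sum]
      apply Finset.sum_congr rfl
      intro j hj
      rw [if_pos (mem_Pset.mp hj)]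
    have eM : ∑ j ∈ Mset a, 2 * (if 0 < a j then c else d) * normSq (z j)
        = 2*d*(smf a z) := by
      rw [smf, Finset.mul_sum]
      apply Finset.sum_congr rfl
      intro j hj
      rw [if_neg (by have := mem_Mset.mp hj; omega)]
    rw [eP, eM]; ring
  have hx : L1 w = x := by
    rw [e1, ← ht, ← htt, hc, hdd]
    field_simp
    ring_nf
    linear_combination x * hs
  have hy : L2 w = y := by
    rw [e2, hc, hdd]
    have e3 : c * spf a z + d * smf a z = y/2 := by
      rw [hc, hdd]
      field_simp
      ring_nf
      linear_combination (t*y) * hs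
    rw [hc, hdd] at e3
    linarith [e3]
  show (L1.prod L2) w = (x, y)
  rw [ContinuousLinearMap.prod_apply, hx, hy]


variable {np nm : ℕ}

noncomputable def Fmap (a : Fin n → ℤ) (e : {j : Fin n // 0 < a j} ≃ Fin np)
    (f : {j : Fin n // a j < 0} ≃ Fin nm) (z : Fin n → ℂ) :
    (Fin np → ℂ) × (Fin nm → ℂ) :=
  (fun i => (((Real.sqrt (mup a z))⁻¹ : ℝ) : ℂ) * z (e.symm i).1,
   fun i => (((Real.sqrt (mum a z))⁻¹ : ℝ) : ℂ) * z (f.symm i).1)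

noncomputable def A1 (a : Fin n → ℤ) (e : {j : Fin n // 0 < a j} ≃ Fin np)
    (u : Fin np → ℂ) : ℝ := ∑ i, (a (e.symm i).1 : ℝ) * normSq (u i)

noncomputable def B1 (a : Fin n → ℤ) (f : {j : Fin n // a j < 0} ≃ Fin nm)
    (v : Fin nm → ℂ) : ℝ := ∑ i, (-(a (f.symm i).1 : ℝ)) * normSq (v i)

noncomputable def ssum {k : ℕ} (u : Fin k → ℂ) : ℝ := ∑ i, normSq (u i)

noncomputable def nump (a : Fin n → ℤ) (f : {j : Fin n // a j < 0} ≃ Fin nm)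
    (x : (Fin np → ℂ) × (Fin nm → ℂ)) : ℝ := B1 a f x.2 + (ssum x.2 - 1)^2/2

noncomputable def numm (a : Fin n → ℤ) (e : {j : Fin n // 0 < a j} ≃ Fin np)
    (x : (Fin np → ℂ) × (Fin nm → ℂ)) : ℝ := A1 a e x.1 + (ssum x.1 - 1)^2/2

noncomputable def dens (a : Fin n → ℤ) (e : {j : Fin n // 0 < a j} ≃ Fin np)
    (f : {j : Fin n // a j < 0} ≃ Fin nm) (x : (Fin np → ℂ) × (Fin nm → ℂ)) : ℝ :=
  nump a f x + numm a e x

noncomputable def Gmap (a : Fin n → ℤ) (e : {j : Fin n // 0 < a j} ≃ Fin np)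
    (f : {j : Fin n // a j < 0} ≃ Fin nm) (x : (Fin np → ℂ) × (Fin nm → ℂ)) :
    Fin n → ℂ := fun j =>
  if h : 0 < a j then
    ((Real.sqrt (nump a f x / dens a e f x) : ℝ) : ℂ) * x.1 (e ⟨j, h⟩)
  else if h' : a j < 0 then
    ((Real.sqrt (numm a e x / dens a e f x) : ℝ) : ℂ) * x.2 (f ⟨j, h'⟩)
  else 0

variable {a : Fin n → ℤ} {e : {j : Fin n // 0 < a j} ≃ Fin np}
  {f : {j : Fin n // a j < 0} ≃ Fin nm}

lemma ssum_nonneg {k : ℕ} (u : Fin k → ℂ) : 0 ≤ ssum u :=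
  Finset.sum_nonneg fun i _ => normSq_nonneg _

lemma ssum_le_A1 (u : Fin np → ℂ) : ssum u ≤ A1 a e u := by
  apply Finset.sum_le_sum
  intro i _
  have h1 : (1:ℝ) ≤ (a (e.symm i).1 : ℝ) := by exact_mod_cast (e.symm i).2
  nlinarith [normSq_nonneg (u i)]

lemma ssum_le_B1 (v : Fin nm → ℂ) : ssum v ≤ B1 a f v := by
  apply Finset.sum_le_sum
  intro i _
  have h1 : (a (f.symm i).1 : ℝ) ≤ -1 := by
    exact_mod_cast Int.le_of_lt_add_one (by simpa using (f.symm i).2)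
  nlinarith [normSq_nonneg (v i)]

lemma nump_pos (x : (Fin np → ℂ) × (Fin nm → ℂ)) : 0 < nump a f x := by
  have := ssum_le_B1 (a := a) (f := f) x.2
  have := ssum_nonneg x.2
  unfold nump; nlinarith

lemma numm_pos (x : (Fin np → ℂ) × (Fin nm → ℂ)) : 0 < numm a e x := by
  have := ssum_le_A1 (a := a) (e := e) x.1
  have := ssum_nonneg x.1
  unfold numm; nlinarith

lemma dens_pos (x : (Fin np → ℂ) × (Fin nm → ℂ)) : 0 < dens a e f x :=
  add_pos (nump_pos x) (numm_pos x)

lemma nup_pos (x : (Fin np → ℂ) × (Fin nm → ℂ)) : 0 < nump a f x / dens a e f x :=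
  div_pos (nump_pos x) (dens_pos x)

lemma num_pos' (x : (Fin np → ℂ) × (Fin nm → ℂ)) : 0 < numm a e x / dens a e f x :=
  div_pos (numm_pos x) (dens_pos x)

lemma contDiff_coordP (i : Fin np) :
    ContDiff ℝ (⊤ : ℕ∞) (fun x : (Fin np → ℂ) × (Fin nm → ℂ) => x.1 i) :=
  (contDiff_coord i).comp contDiff_fst
lemma contDiff_coordM (i : Fin nm) :
    ContDiff ℝ (⊤ : ℕ∞) (fun x : (Fin np → ℂ) × (Fin nm → ℂ) => x.2 i) :=
  (contDiff_coord i).comp contDiff_snd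

lemma contDiff_A1x : ContDiff ℝ (⊤ : ℕ∞) (fun x : (Fin np → ℂ) × (Fin nm → ℂ) => A1 a e x.1) :=
  ContDiff.sum fun i _ =>
    contDiff_const.mul (contDiff_normSq.comp (contDiff_coordP i))
lemma contDiff_B1x : ContDiff ℝ (⊤ : ℕ∞) (fun x : (Fin np → ℂ) × (Fin nm → ℂ) => B1 a f x.2) :=
  ContDiff.sum fun i _ =>
    contDiff_const.mul (contDiff_normSq.comp (contDiff_coordM i))
lemma contDiff_ssum1 : ContDiff ℝ (⊤ : ℕ∞) (fun x : (Fin np → ℂ) × (Fin nm → ℂ) => ssum x.1) :=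
  ContDiff.sum fun i _ => contDiff_normSq.comp (contDiff_coordP i)
lemma contDiff_ssum2 : ContDiff ℝ (⊤ : ℕ∞) (fun x : (Fin np → ℂ) × (Fin nm → ℂ) => ssum x.2) :=
  ContDiff.sum fun i _ => contDiff_normSq.comp (contDiff_coordM i)

lemma contDiff_nump : ContDiff ℝ (⊤ : ℕ∞) (nump a f (np := np)) := by
  unfold nump
  exact contDiff_B1x.add (((contDiff_ssum2.sub contDiff_const).pow 2).div_const 2)

lemma contDiff_numm : ContDiff ℝ (⊤ : ℕ∞) (numm a e (nm := nm)) := by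
  unfold numm
  exact contDiff_A1x.add (((contDiff_ssum1.sub contDiff_const).pow 2).div_const 2)

lemma contDiff_dens : ContDiff ℝ (⊤ : ℕ∞) (dens a e f) := by
  unfold dens; exact contDiff_nump.add contDiff_numm

lemma contDiff_Fmap : ContDiff ℝ (⊤ : ℕ∞) (Fmap a e f) := by
  unfold Fmap
  apply ContDiff.prodMk
  · apply contDiff_pi.mpr
    intro i
    exact (Complex.ofRealCLM.contDiff.comp
      (contDiff_invsqrt contDiff_mup mup_pos)).mul (contDiff_coord _)
  · apply contDiff_pi.mpr
    intro i
    exact (Complex.ofRealCLM.contDiff.comp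
      (contDiff_invsqrt contDiff_mum mum_pos)).mul (contDiff_coord _)

lemma contDiff_Gmap : ContDiff ℝ (⊤ : ℕ∞) (Gmap a e f) := by
  unfold Gmap
  apply contDiff_pi.mpr
  intro j
  by_cases h : 0 < a j
  · simp only [dif_pos h]
    exact (Complex.ofRealCLM.contDiff.comp
      (contDiff_sqrt_comp (contDiff_nump.div contDiff_dens fun x => (dens_pos x).ne')
        nup_pos)).mul (contDiff_coordP _)
  · simp only [dif_neg h]
    by_cases h' : a j < 0
    · simp only [dif_pos h']
      exact (Complex.ofRealCLM.contDiff.comp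
        (contDiff_sqrt_comp (contDiff_numm.div contDiff_dens fun x => (dens_pos x).ne')
          num_pos')).mul (contDiff_coordM _)
    · simp only [dif_neg h']
      exact contDiff_const


lemma sumP (g : Fin n → ℝ) : ∑ j ∈ Pset a, g j = ∑ s : {j // 0 < a j}, g s.1 :=
  Finset.sum_subtype _ (fun j => mem_Pset) g
lemma sumM (g : Fin n → ℝ) : ∑ j ∈ Mset a, g j = ∑ s : {j // a j < 0}, g s.1 :=
  Finset.sum_subtype _ (fun j => mem_Mset) g

lemma normSq_real_mul (r : ℝ) (w : ℂ) : normSq ((r : ℂ) * w) = r^2 * normSq w := by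
  rw [Complex.normSq_mul, Complex.normSq_ofReal]; ring

-- F-side sums
lemma ssum_F1 (z : Fin n → ℂ) :
    ssum (Fmap a e f z).1 = ((Real.sqrt (mup a z))⁻¹)^2 * spf a z := by
  unfold ssum Fmap spf
  simp only
  rw [Finset.sum_congr rfl fun i _ => normSq_real_mul _ _, ← Finset.mul_sum]
  congr 1
  rw [Equiv.sum_comp e.symm (fun s : {j // 0 < a j} => normSq (z s.1))]
  exact (sumP (a := a) (fun j => normSq (z j))).symm

lemma ssum_F2 (z : Fin n → ℂ) :
    ssum (Fmap a e f z).2 = ((Real.sqrt (mum a z))⁻¹)^2 * smf a z := by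
  unfold ssum Fmap smf
  simp only
  rw [Finset.sum_congr rfl fun i _ => normSq_real_mul _ _, ← Finset.mul_sum]
  congr 1
  rw [Equiv.sum_comp f.symm (fun s : {j // a j < 0} => normSq (z s.1))]
  exact (sumM (a := a) (fun j => normSq (z j))).symm

lemma A1_F1 (z : Fin n → ℂ) :
    A1 a e (Fmap a e f z).1 = ((Real.sqrt (mup a z))⁻¹)^2 * tpf a z := by
  unfold A1 Fmap tpf
  simp only
  have : ∀ i : Fin np, (a (e.symm i).1 : ℝ) *
      normSq ((((Real.sqrt (mup a z))⁻¹ : ℝ) : ℂ) * z (e.symm i).1)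
      = ((Real.sqrt (mup a z))⁻¹)^2 * ((a (e.symm i).1 : ℝ) * normSq (z (e.symm i).1)) := by
    intro i; rw [normSq_real_mul]; ring
  rw [Finset.sum_congr rfl fun i _ => this i, ← Finset.mul_sum]
  congr 1
  rw [Equiv.sum_comp e.symm (fun s : {j // 0 < a j} => (a s.1 : ℝ) * normSq (z s.1))]
  exact (sumP (a := a) (fun j => (a j : ℝ) * normSq (z j))).symm

lemma B1_F2 (z : Fin n → ℂ) :
    B1 a f (Fmap a e f z).2 = ((Real.sqrt (mum a z))⁻¹)^2 * tmf a z := by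
  unfold B1 Fmap tmf
  simp only
  have : ∀ i : Fin nm, (-(a (f.symm i).1 : ℝ)) *
      normSq ((((Real.sqrt (mum a z))⁻¹ : ℝ) : ℂ) * z (f.symm i).1)
      = ((Real.sqrt (mum a z))⁻¹)^2 * ((-(a (f.symm i).1 : ℝ)) * normSq (z (f.symm i).1)) := by
    intro i; rw [normSq_real_mul]; ring
  rw [Finset.sum_congr rfl fun i _ => this i, ← Finset.mul_sum]
  congr 1
  rw [Equiv.sum_comp f.symm (fun s : {j // a j < 0} => (-(a s.1 : ℝ)) * normSq (z s.1))]
  exact (sumM (a := a) (fun j => (-(a j : ℝ)) * normSq (z j))).symm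

-- G-side sums
lemma G_apply_pos (x : (Fin np → ℂ) × (Fin nm → ℂ)) (s : {j // 0 < a j}) :
    Gmap a e f x s.1 =
      ((Real.sqrt (nump a f x / dens a e f x) : ℝ) : ℂ) * x.1 (e s) := by
  unfold Gmap
  rw [dif_pos s.2]

lemma G_apply_neg (x : (Fin np → ℂ) × (Fin nm → ℂ)) (s : {j // a j < 0}) :
    Gmap a e f x s.1 =
      ((Real.sqrt (numm a e x / dens a e f x) : ℝ) : ℂ) * x.2 (f s) := by
  unfold Gmap
  rw [dif_neg (by have := s.2; omega), dif_pos s.2]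

lemma spf_G (x : (Fin np → ℂ) × (Fin nm → ℂ)) :
    spf a (Gmap a e f x) = (nump a f x / dens a e f x) * ssum x.1 := by
  unfold spf
  rw [sumP (fun j => normSq (Gmap a e f x j))]
  have h1 : ∀ s : {j // 0 < a j}, normSq (Gmap a e f x s.1)
      = (nump a f x / dens a e f x) * normSq (x.1 (e s)) := by
    intro s
    rw [G_apply_pos x s, normSq_real_mul, Real.sq_sqrt (nup_pos x).le]
  rw [Finset.sum_congr rfl fun s _ => h1 s, ← Finset.mul_sum]
  congr 1
  exact Equiv.sum_comp e (fun i => normSq (x.1 i))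

lemma smf_G (x : (Fin np → ℂ) × (Fin nm → ℂ)) :
    smf a (Gmap a e f x) = (numm a e x / dens a e f x) * ssum x.2 := by
  unfold smf
  rw [sumM (fun j => normSq (Gmap a e f x j))]
  have h1 : ∀ s : {j // a j < 0}, normSq (Gmap a e f x s.1)
      = (numm a e x / dens a e f x) * normSq (x.2 (f s)) := by
    intro s
    rw [G_apply_neg x s, normSq_real_mul, Real.sq_sqrt (num_pos' x).le]
  rw [Finset.sum_congr rfl fun s _ => h1 s, ← Finset.mul_sum]
  congr 1
  exact Equiv.sum_comp f (fun i => normSq (x.2 i))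

lemma tpf_G (x : (Fin np → ℂ) × (Fin nm → ℂ)) :
    tpf a (Gmap a e f x) = (nump a f x / dens a e f x) * A1 a e x.1 := by
  unfold tpf
  rw [sumP (fun j => (a j : ℝ) * normSq (Gmap a e f x j))]
  have h1 : ∀ s : {j // 0 < a j}, (a s.1 : ℝ) * normSq (Gmap a e f x s.1)
      = (nump a f x / dens a e f x) * ((a s.1 : ℝ) * normSq (x.1 (e s))) := by
    intro s
    rw [G_apply_pos x s, normSq_real_mul, Real.sq_sqrt (nup_pos x).le]; ring
  rw [Finset.sum_congr rfl fun s _ => h1 s, ← Finset.mul_sum]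
  congr 1
  have h2 : ∀ s : {j // 0 < a j}, (a s.1 : ℝ) * normSq (x.1 (e s))
      = (fun i => (a (e.symm i).1 : ℝ) * normSq (x.1 i)) (e s) := by
    intro s; simp
  rw [Finset.sum_congr rfl fun s _ => h2 s]
  exact Equiv.sum_comp e (fun i => (a (e.symm i).1 : ℝ) * normSq (x.1 i))

lemma tmf_G (x : (Fin np → ℂ) × (Fin nm → ℂ)) :
    tmf a (Gmap a e f x) = (numm a e x / dens a e f x) * B1 a f x.2 := by
  unfold tmf
  rw [sumM (fun j => (-(a j : ℝ)) * normSq (Gmap a e f x j))]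
  have h1 : ∀ s : {j // a j < 0}, (-(a s.1 : ℝ)) * normSq (Gmap a e f x s.1)
      = (numm a e x / dens a e f x) * ((-(a s.1 : ℝ)) * normSq (x.2 (f s))) := by
    intro s
    rw [G_apply_neg x s, normSq_real_mul, Real.sq_sqrt (num_pos' x).le]; ring
  rw [Finset.sum_congr rfl fun s _ => h1 s, ← Finset.mul_sum]
  congr 1
  have h2 : ∀ s : {j // a j < 0}, (-(a s.1 : ℝ)) * normSq (x.2 (f s))
      = (fun i => (-(a (f.symm i).1 : ℝ)) * normSq (x.2 i)) (f s) := by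
    intro s; simp
  rw [Finset.sum_congr rfl fun s _ => h2 s]
  exact Equiv.sum_comp f (fun i => (-(a (f.symm i).1 : ℝ)) * normSq (x.2 i))


section main
variable (hnz : ∀ j, a j ≠ 0) {z : Fin n → ℂ}
  (h1 : ∑ j, (a j : ℝ) * normSq (z j) = 0) (h2 : ∑ j, normSq (z j) = 1)

include hnz h1 h2

lemma mup_link : mup a z = spf a z := by
  obtain ⟨ht, hs⟩ := link_basic hnz h1 h2
  unfold mup; rw [ht, hs]; ring

lemma mum_link : mum a z = smf a z := by
  obtain ⟨ht, hs⟩ := link_basic hnz h1 h2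
  unfold mum; rw [ht, hs]; ring

lemma F_mem_sphere :
    ssum (Fmap a e f z).1 = 1 ∧ ssum (Fmap a e f z).2 = 1 := by
  obtain ⟨hsp, hsm⟩ := link_spf_pos hnz h1 h2
  constructor
  · rw [ssum_F1, mup_link hnz h1 h2, inv_pow, Real.sq_sqrt (spf_nonneg z)]
    field_simp
  · rw [ssum_F2, mum_link hnz h1 h2, inv_pow, Real.sq_sqrt (smf_nonneg z)]
    field_simp

lemma nump_F : nump a f (Fmap a e f z) = tmf a z / smf a z := by
  obtain ⟨hsp, hsm⟩ := link_spf_pos hnz h1 h2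
  unfold nump
  rw [B1_F2, ssum_F2, mum_link hnz h1 h2, inv_pow, Real.sq_sqrt (smf_nonneg z)]
  field_simp
  ring

lemma numm_F : numm a e (Fmap a e f z) = tpf a z / spf a z := by
  obtain ⟨hsp, hsm⟩ := link_spf_pos hnz h1 h2
  unfold numm
  rw [A1_F1, ssum_F1, mup_link hnz h1 h2, inv_pow, Real.sq_sqrt (spf_nonneg z)]
  field_simp
  ring

lemma nup_F : nump a f (Fmap a e f z) / dens a e f (Fmap a e f z) = spf a z := by
  obtain ⟨ht, hs⟩ := link_basic hnz h1 h2
  obtain ⟨hsp, hsm⟩ := link_spf_pos hnz h1 h2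
  have htp : 0 < tpf a z := lt_of_lt_of_le hsp (spf_le_tpf z)
  unfold dens
  rw [nump_F hnz h1 h2 (e := e), numm_F hnz h1 h2 (f := f), ← ht]
  rw [div_add_div _ _ (ne_of_gt hsm) (ne_of_gt hsp)]
  rw [div_div_div_eq]
  rw [div_eq_iff (by positivity)]
  linear_combination (-(tpf a z * smf a z * spf a z)) * hs

lemma num_F : numm a e (Fmap a e f z) / dens a e f (Fmap a e f z) = smf a z := by
  obtain ⟨ht, hs⟩ := link_basic hnz h1 h2
  obtain ⟨hsp, hsm⟩ := link_spf_pos hnz h1 h2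
  have htp : 0 < tpf a z := lt_of_lt_of_le hsp (spf_le_tpf z)
  unfold dens
  rw [nump_F hnz h1 h2 (e := e), numm_F hnz h1 h2 (f := f), ← ht]
  rw [div_add_div _ _ (ne_of_gt hsm) (ne_of_gt hsp)]
  rw [div_div_div_eq]
  rw [div_eq_iff (by positivity)]
  linear_combination (-(tpf a z * smf a z * spf a z)) * hs

lemma G_F : Gmap a e f (Fmap a e f z) = z := by
  obtain ⟨hsp, hsm⟩ := link_spf_pos hnz h1 h2
  funext j
  rcases (hnz j).lt_or_gt with h | h
  · have key := G_apply_neg (a := a) (e := e) (f := f) (Fmap a e f z) ⟨j, h⟩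
    rw [key, num_F hnz h1 h2]
    show (↑(Real.sqrt (smf a z)) : ℂ) *
      ((((Real.sqrt (mum a z))⁻¹ : ℝ) : ℂ) * z (f.symm (f ⟨j, h⟩)).1) = z j
    rw [Equiv.symm_apply_apply, mum_link hnz h1 h2, ← mul_assoc, ← Complex.ofReal_mul,
      mul_inv_cancel₀ (by positivity), Complex.ofReal_one, one_mul]
  · have key := G_apply_pos (a := a) (e := e) (f := f) (Fmap a e f z) ⟨j, h⟩
    rw [key, nup_F hnz h1 h2]
    show (↑(Real.sqrt (spf a z)) : ℂ) *
      ((((Real.sqrt (mup a z))⁻¹ : ℝ) : ℂ) * z (e.symm (e ⟨j, h⟩)).1) = z j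
    rw [Equiv.symm_apply_apply, mup_link hnz h1 h2, ← mul_assoc, ← Complex.ofReal_mul,
      mul_inv_cancel₀ (by positivity), Complex.ofReal_one, one_mul]

end main

section mainG
variable (hnz : ∀ j, a j ≠ 0) {x : (Fin np → ℂ) × (Fin nm → ℂ)}
  (hs1 : ssum x.1 = 1) (hs2 : ssum x.2 = 1)

include hnz hs1 hs2

lemma G_mem_link :
    (∑ j, (a j : ℝ) * normSq (Gmap a e f x j)) = 0 ∧
      (∑ j, normSq (Gmap a e f x j)) = 1 := by
  have hd := dens_pos (a := a) (e := e) (f := f) x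
  have e1 : nump a f x = B1 a f x.2 := by unfold nump; rw [hs2]; ring
  have e2 : numm a e x = A1 a e x.1 := by unfold numm; rw [hs1]; ring
  constructor
  · rw [← tpf_sub_tmf hnz (Gmap a e f x), tpf_G, tmf_G, e1, e2]
    ring
  · rw [← spf_add_smf hnz (Gmap a e f x), spf_G, smf_G, hs1, hs2, mul_one, mul_one,
      ← add_div,
      show nump a f x + numm a e x = dens a e f x from rfl]
    exact div_self hd.ne'

lemma F_G : Fmap a e f (Gmap a e f x) = x := by
  obtain ⟨g1, g2⟩ := G_mem_link (e := e) (f := f) hnz hs1 hs2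
  have hmup : mup a (Gmap a e f x) = spf a (Gmap a e f x) := mup_link hnz g1 g2
  have hmum : mum a (Gmap a e f x) = smf a (Gmap a e f x) := mum_link hnz g1 g2
  have hspG : spf a (Gmap a e f x) = nump a f x / dens a e f x := by
    rw [spf_G, hs1, mul_one]
  have hsmG : smf a (Gmap a e f x) = numm a e x / dens a e f x := by
    rw [smf_G, hs2, mul_one]
  have hnup := nup_pos (a := a) (e := e) (f := f) x
  have hnum := num_pos' (a := a) (e := e) (f := f) x
  apply Prod.ext
  · funext i
    show (((Real.sqrt (mup a (Gmap a e f x)))⁻¹ : ℝ) : ℂ) *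
      Gmap a e f x (e.symm i).1 = x.1 i
    rw [G_apply_pos (a := a) (e := e) (f := f) x (e.symm i), Equiv.apply_symm_apply,
      hmup, hspG, ← mul_assoc, ← Complex.ofReal_mul,
      inv_mul_cancel₀ (by positivity), Complex.ofReal_one, one_mul]
  · funext i
    show (((Real.sqrt (mum a (Gmap a e f x)))⁻¹ : ℝ) : ℂ) *
      Gmap a e f x (f.symm i).1 = x.2 i
    rw [G_apply_neg (a := a) (e := e) (f := f) x (f.symm i), Equiv.apply_symm_apply,
      hmum, hsmG, ← mul_assoc, ← Complex.ofReal_mul,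
      inv_mul_cancel₀ (by positivity), Complex.ofReal_one, one_mul]

end mainG
end Link15


/-- For a nonzero integer row vector with no zero entries, n₊ positive and
n₋ negative entries (n₊, n₋ ≥ 1), the set X_A is a smooth submanifold of ℂⁿ (the defining
map has surjective differential at every point of X_A, i.e. (0,1) is a regular value) which
is diffeomorphic to S^{2n₊−1} × S^{2n₋−1}: there are smooth maps F, G between the ambient
spaces restricting to mutually inverse bijections between X_A and the product of spheres. -/
theorem linkSet_diffeomorphic_sphereProd {n : ℕ} (a : Fin n → ℤ)
    (hnz : ∀ j, a j ≠ 0) (np nm : ℕ)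
    (hnp : np = (Finset.univ.filter fun j => 0 < a j).card)
    (hnm : nm = (Finset.univ.filter fun j => a j < 0).card)
    (hp : 1 ≤ np) (hm : 1 ≤ nm) :
    (∀ z ∈ linkSet a,
      Function.Surjective
        (fderiv ℝ (fun z : Fin n → ℂ =>
          ((∑ j, (a j : ℝ) * Complex.normSq (z j), ∑ j, Complex.normSq (z j)) : ℝ × ℝ)) z)) ∧
    ∃ (F : (Fin n → ℂ) → (Fin np → ℂ) × (Fin nm → ℂ))
      (G : ((Fin np → ℂ) × (Fin nm → ℂ)) → (Fin n → ℂ)),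
      ContDiff ℝ (⊤ : ℕ∞) F ∧ ContDiff ℝ (⊤ : ℕ∞) G ∧
      (∀ z ∈ linkSet a, F z ∈ sphereProd np nm) ∧
      (∀ x ∈ sphereProd np nm, G x ∈ linkSet a) ∧
      (∀ z ∈ linkSet a, G (F z) = z) ∧
      (∀ x ∈ sphereProd np nm, F (G x) = x) := by
  classical
  constructor
  · rintro z ⟨hz1, hz2⟩
    exact Link15.surj_aux hnz hz1 hz2
  · have cardP : Fintype.card {j : Fin n // 0 < a j} = np := by
      rw [Fintype.card_subtype]; exact hnp.symm
    have cardM : Fintype.card {j : Fin n // a j < 0} = nm := by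
      rw [Fintype.card_subtype]; exact hnm.symm
    have e := Fintype.equivFinOfCardEq cardP
    have f := Fintype.equivFinOfCardEq cardM
    refine ⟨Link15.Fmap a e f, Link15.Gmap a e f, Link15.contDiff_Fmap, Link15.contDiff_Gmap,
      ?_, ?_, ?_, ?_⟩
    · rintro z ⟨hz1, hz2⟩
      exact Link15.F_mem_sphere hnz hz1 hz2
    · rintro x ⟨hx1, hx2⟩
      exact Link15.G_mem_link hnz hx1 hx2
    · rintro z ⟨hz1, hz2⟩
      exact Link15.G_F hnz hz1 hz2
    · rintro x ⟨hx1, hx2⟩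
      exact Link15.F_G hnz hx1 hx2
end
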